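/- arXiv:1205.2750 — 2 statements merged into one kernel-verified Lean document; each statement's English description precedes it below -/
import Mathlib

section
/- Characterization of Radau polynomials by orthogonality: Let q ≥ 1 and let f be a polynomial of degree ≤ q with real coefficients satisfying ∫_{−1}^{1} f(x) (x+1)^p dx = 0 for every p = 1, …, q. Then f is a scalar multiple of the q-th Radau polynomial: f = c · Q_q for some c ∈ ℝ, where Q_q(x) = (P_q(x) + P_{q+1}(x))/(x+1). -/
open MeasureTheory intervalIntegral Polynomial

/-- The `q`-th Legendre polynomial, via Rodrigues' formula
`P_q(x) = (1/(2^q q!)) (d/dx)^q ((x² − 1)^q)`. -/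
noncomputable def legendrePoly (q : ℕ) : Polynomial ℝ :=
  Polynomial.C (1 / (2 ^ q * (Nat.factorial q) : ℝ)) *
    (Polynomial.derivative^[q] ((Polynomial.X ^ 2 - 1) ^ q))

/-!
`P_q + P_{q+1} = (x+1) Q_q` has degree `q+1` and, by Rodrigues' formula and repeated
integration by parts, is orthogonal to every polynomial of degree `< q`; so `Q_q` has degree `q`
and satisfies the same conditions as `f`. Subtracting the multiple of `Q_q` that cancels the
`x^q`-coefficient leaves a polynomial `r` of degree `< q` with `∫ r (x+1)^p = 0` for
`1 ≤ p ≤ q`. Expanding `r` in powers of `x+1` gives `∫ (x+1) r² = 0`, hence `r = 0`.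
-/

namespace Polynomial

variable {a b : ℝ}

theorem integral_derivative_mul_eq_neg (u v : ℝ[X]) (ha : u.eval a = 0) (hb : u.eval b = 0) :
    ∫ x in a..b, u.derivative.eval x * v.eval x =
      -∫ x in a..b, u.eval x * v.derivative.eval x := by
  have := integral_mul_deriv_eq_deriv_mul (fun x _ => v.hasDerivAt x)
    (fun x _ => u.hasDerivAt x) (v.derivative.continuous.intervalIntegrable a b)
    (u.derivative.continuous.intervalIntegrable a b)
  simp only [ha, hb, mul_zero, sub_zero, zero_sub] at this
  simpa only [mul_comm] using this

theorem integral_iterate_derivative_mul_eq_zero {u g : ℝ[X]} {n : ℕ}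
    (ha : ∀ m < n, (derivative^[m] u).eval a = 0) (hb : ∀ m < n, (derivative^[m] u).eval b = 0)
    (hg : derivative^[n] g = 0) :
    ∫ x in a..b, (derivative^[n] u).eval x * g.eval x = 0 := by
  induction n generalizing g with
  | zero => simp [show g = 0 from hg]
  | succ n ih =>
    rw [Function.iterate_succ_apply', integral_derivative_mul_eq_neg _ _ (ha n n.lt_succ_self)
      (hb n n.lt_succ_self), ih (fun m hm => ha m (by omega)) (fun m hm => hb m (by omega)) hg,
      neg_zero]

theorem IsRoot.iterate_derivative_pow {R : Type*} [CommRing R] {p : R[X]} {x : R}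
    (hx : p.IsRoot x) {n m : ℕ} (hm : m < n) : (derivative^[m] (p ^ n)).IsRoot x := by
  obtain ⟨c, hc⟩ := pow_sub_dvd_iterate_derivative_pow p n m
  simp [hc, hx.eq_zero, zero_pow (Nat.sub_ne_zero_of_lt hm)]

theorem integral_mul_eq_zero_of_forall_pow {h g : ℝ[X]} {c : ℝ} {n : ℕ}
    (horth : ∀ i < n, ∫ x in a..b, h.eval x * (x - c) ^ i = 0) (hg : g.natDegree < n) :
    ∫ x in a..b, h.eval x * g.eval x = 0 := by
  have hexp (x : ℝ) :
      g.eval x = ∑ i ∈ Finset.range n, (taylor c g).coeff i * (x - c) ^ i := by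
    rw [← eval_eq_sum_range' (by rwa [natDegree_taylor]), taylor_eval, sub_add_cancel]
  simp_rw [hexp, Finset.mul_sum, mul_left_comm (h.eval _)]
  rw [integral_finsetSum fun i _ => Continuous.intervalIntegrable (by fun_prop) a b]
  exact Finset.sum_eq_zero fun i hi => by
    rw [intervalIntegral.integral_const_mul, horth i (Finset.mem_range.1 hi), mul_zero]

theorem eq_zero_of_integral_mul_sub_pow_succ_eq_zero {r : ℝ[X]} {n : ℕ} (hab : a < b)
    (hr : r.degree < n) (horth : ∀ i < n, ∫ x in a..b, r.eval x * (x - a) ^ (i + 1) = 0) :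
    r = 0 := by
  by_contra hr0
  have hweighted : ∫ x in a..b, (r * (X - C a)).eval x * r.eval x = 0 :=
    integral_mul_eq_zero_of_forall_pow (c := a)
      (fun i hi => by
        simpa only [eval_mul, eval_sub, eval_X, eval_C, mul_assoc, pow_succ'] using horth i hi)
      ((natDegree_lt_iff_degree_lt hr0).2 hr)
  obtain ⟨x₀, hx₀, hrx₀⟩ : ∃ x ∈ Set.Ioo a b, ¬ r.IsRoot x :=
    ((Set.Ioo_infinite hab).sdiff (finite_setOfPred_isRoot hr0)).nonempty
  refine (integral_pos hab (by fun_prop) (fun x hx => ?_)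
    ⟨x₀, Set.Ioo_subset_Icc_self hx₀, ?_⟩).ne' hweighted
  · have : 0 ≤ x - a := by linarith [hx.1]
    simp only [eval_mul, eval_sub, eval_X, eval_C]
    nlinarith [mul_nonneg this (mul_self_nonneg (r.eval x))]
  · have : 0 < x₀ - a := by linarith [hx₀.1]
    simp only [eval_mul, eval_sub, eval_X, eval_C]
    nlinarith [mul_pos this (mul_self_pos.2 hrx₀)]

theorem degree_sub_C_mul_lt {K : Type*} [Field K] {f g : K[X]} {n : ℕ} (hf : f.natDegree ≤ n)
    (hg : g.natDegree = n) (hg0 : g ≠ 0) :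
    (f - C (f.coeff n / g.leadingCoeff) * g).degree < n := by
  rw [degree_lt_iff_coeff_zero]
  intro m hm
  rcases hm.eq_or_lt with rfl | hlt
  · rw [coeff_sub, coeff_C_mul, ← hg, ← leadingCoeff,
      div_mul_cancel₀ _ (leadingCoeff_ne_zero.2 hg0), sub_self]
  · rw [coeff_sub, coeff_C_mul, coeff_eq_zero_of_natDegree_lt (hf.trans_lt hlt),
      coeff_eq_zero_of_natDegree_lt (show g.natDegree < m by omega), mul_zero, sub_zero]

end Polynomial

theorem natDegree_legendrePoly (n : ℕ) : (legendrePoly n).natDegree = n := by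
  have hmonic : (X ^ 2 - 1 : ℝ[X]).Monic := by
    simpa using monic_X_pow_sub_C (1 : ℝ) two_ne_zero
  have hdeg : ((X ^ 2 - 1 : ℝ[X]) ^ n).natDegree = n + n := by
    rw [hmonic.natDegree_pow, ← C_1, natDegree_X_pow_sub_C]; ring
  apply natDegree_eq_of_le_of_coeff_ne_zero
  · exact (natDegree_C_mul_le _ _).trans ((natDegree_iterate_derivative _ _).trans (by omega))
  · have hlead : ((X ^ 2 - 1 : ℝ[X]) ^ n).coeff (n + n) = 1 :=
      hdeg ▸ (hmonic.pow n).coeff_natDegree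
    rw [legendrePoly, coeff_C_mul, coeff_iterate_derivative, hlead]
    simp [Nat.descFactorial_eq_zero_iff_lt, Nat.factorial_ne_zero]

theorem integral_legendrePoly_mul_eq_zero {n : ℕ} {g : ℝ[X]} (hg : g.natDegree < n) :
    ∫ x in (-1 : ℝ)..1, (legendrePoly n).eval x * g.eval x = 0 := by
  have hroot (x : ℝ) (hx : x ^ 2 = 1) (m : ℕ) (hm : m < n) :
      (derivative^[m] ((X ^ 2 - 1 : ℝ[X]) ^ n)).eval x = 0 :=
    (IsRoot.iterate_derivative_pow (by simp [hx]) hm).eq_zero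
  simp only [legendrePoly, eval_mul, eval_C, mul_assoc, intervalIntegral.integral_const_mul]
  rw [integral_iterate_derivative_mul_eq_zero (hroot _ (by norm_num)) (hroot _ (by norm_num))
    (iterate_derivative_eq_zero hg), mul_zero]

theorem natDegree_legendrePoly_add_succ (n : ℕ) :
    (legendrePoly n + legendrePoly (n + 1)).natDegree = n + 1 := by
  rw [natDegree_add_eq_right_of_natDegree_lt] <;> simp [natDegree_legendrePoly]

/-- `Q` is the `q`-th Radau polynomial `(P_q + P_{q+1})/(x+1)`, stated without division. -/
def IsRadau (q : ℕ) (Q : ℝ[X]) : Prop :=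
  legendrePoly q + legendrePoly (q + 1) = (X + C 1) * Q

namespace IsRadau

variable {q : ℕ} {Q : ℝ[X]}

theorem ne_zero (hQ : IsRadau q Q) : Q ≠ 0 := by
  rintro rfl
  have := natDegree_legendrePoly_add_succ q
  rw [hQ, mul_zero, natDegree_zero] at this
  omega

theorem natDegree_eq (hQ : IsRadau q Q) : Q.natDegree = q := by
  have := natDegree_legendrePoly_add_succ q
  rw [hQ, natDegree_mul (X_add_C_ne_zero 1) hQ.ne_zero, natDegree_X_add_C] at this
  omega

theorem integral_mul_pow_succ_eq_zero (hQ : IsRadau q Q) {i : ℕ} (hi : i < q) :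
    ∫ x in (-1 : ℝ)..1, Q.eval x * (x + 1) ^ (i + 1) = 0 := by
  have hP (n : ℕ) (hn : i < n) :
      ∫ x in (-1 : ℝ)..1, (legendrePoly n).eval x * ((X + C 1 : ℝ[X]) ^ i).eval x = 0 :=
    integral_legendrePoly_mul_eq_zero (by rwa [natDegree_pow, natDegree_X_add_C, mul_one])
  calc ∫ x in (-1 : ℝ)..1, Q.eval x * (x + 1) ^ (i + 1)
      = ∫ x in (-1 : ℝ)..1, (legendrePoly q).eval x * ((X + C 1 : ℝ[X]) ^ i).eval x +
          (legendrePoly (q + 1)).eval x * ((X + C 1 : ℝ[X]) ^ i).eval x := by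
        refine integral_congr fun x _ => ?_
        rw [← add_mul, ← eval_add, hQ]
        simp only [eval_mul, eval_add, eval_pow, eval_X, eval_C]
        ring
    _ = 0 := by
        rw [integral_add (Continuous.intervalIntegrable (by fun_prop) _ _)
          (Continuous.intervalIntegrable (by fun_prop) _ _), hP q hi, hP (q + 1) (by omega),
          add_zero]

end IsRadau

theorem radau_characterization_general (q : ℕ)
    (Q : Polynomial ℝ)
    (hQ : legendrePoly q + legendrePoly (q + 1) = (Polynomial.X + Polynomial.C 1) * Q)
    (f : Polynomial ℝ) (hf : f.natDegree ≤ q)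
    (horth : ∀ p : ℕ, 1 ≤ p → p ≤ q →
      ∫ x in (-1 : ℝ)..1, f.eval x * (x + 1) ^ p = 0) :
    ∃ c : ℝ, f = Polynomial.C c * Q := by
  have hRadau : IsRadau q Q := hQ
  refine ⟨f.coeff q / Q.leadingCoeff, sub_eq_zero.1 ?_⟩
  refine eq_zero_of_integral_mul_sub_pow_succ_eq_zero (by norm_num : (-1 : ℝ) < 1)
    (degree_sub_C_mul_lt hf hRadau.natDegree_eq hRadau.ne_zero) fun i hi => ?_
  simp only [eval_sub, eval_mul, eval_C, sub_mul, sub_neg_eq_add, mul_assoc]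
  rw [integral_sub (Continuous.intervalIntegrable (by fun_prop) _ _)
      (Continuous.intervalIntegrable (by fun_prop) _ _),
    intervalIntegral.integral_const_mul, horth _ (by omega) hi,
    hRadau.integral_mul_pow_succ_eq_zero hi, mul_zero, sub_zero]

/-- Characterization of Radau polynomials by orthogonality: if `f` is a polynomial of
degree `≤ q` with `∫_{−1}^{1} f(x) (x+1)^p dx = 0` for `p = 1, …, q`, then `f` is a scalar
multiple of the `q`-th Radau polynomial `Q_q = (P_q + P_{q+1})/(x+1)`. -/
theorem radau_characterization (q : ℕ) (hq : 1 ≤ q)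
    (Q : Polynomial ℝ)
    (hQ : legendrePoly q + legendrePoly (q + 1) = (Polynomial.X + Polynomial.C 1) * Q)
    (f : Polynomial ℝ) (hf : f.natDegree ≤ q)
    (horth : ∀ p : ℕ, 1 ≤ p → p ≤ q →
      ∫ x in (-1 : ℝ)..1, f.eval x * (x + 1) ^ p = 0) :
    ∃ c : ℝ, f = Polynomial.C c * Q :=
  radau_characterization_general q Q hQ f hf horth
end

section
/- The L²-projection of the mdG residual is a Radau polynomial: Let a < b, q ≥ 1, and let g ∈ L²(a,b) satisfy ∫_a^b g(t) (t − a)^p dt = 0 for every p = 1, …, q. Let R̃ be the orthogonal projection of g in L²(a,b) onto the subspace of polynomials of degree ≤ q. Then R̃ is a scalar multiple of the rescaled q-th Radau polynomial: R̃(t) = c · Q_q(σ(t)) for some c ∈ ℝ, where σ(t) = (2t − a − b)/(b − a) (so σ(a) = −1). -/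
/-!
Let `V` be the space of polynomials of degree `≤ q` orthogonal on `[a, b]` to `(t - a)^p`,
`1 ≤ p ≤ q`. An element of `V` vanishing at `a` is `(t - a) U` with `deg U < q`, hence
orthogonal to itself and zero; so evaluation at `a` is injective on `V`. The projection `R̃`
lies in `V` because `g` and `g - R̃` are orthogonal to these powers. The rescaled Radau
polynomial lies in `V` as well, since `Q_q(x) (x + 1)^p = (P_q + P_{q+1})(x) (x + 1)^(p - 1)`
and, by Rodrigues' formula and repeated integration by parts, `P_n` is orthogonal to all
polynomials of degree `< n`; by injectivity it does not vanish at `a`, so `R̃` is a multiple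
of it.
-/

open MeasureTheory intervalIntegral Polynomial

theorem integral_mul_iterate_derivative_eq_zero {f : ℝ[X]} {a b : ℝ} {n j : ℕ}
    (hf : ∀ i < n, (derivative^[i] f).eval a = 0 ∧ (derivative^[i] f).eval b = 0)
    (hj : j ≤ n) {u : ℝ[X]} (hu : u.natDegree < j) :
    ∫ x in a..b, u.eval x * (derivative^[j] f).eval x = 0 := by
  induction j generalizing u with
  | zero => omega
  | succ j ih =>
    have hrest : ∫ x in a..b, u.derivative.eval x * (derivative^[j] f).eval x = 0 := by
      rcases Nat.eq_zero_or_pos j with rfl | hj0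
      · simp [derivative_of_natDegree_zero (Nat.lt_one_iff.mp hu)]
      · exact ih (by omega) ((natDegree_derivative_le u).trans_lt (by omega))
    obtain ⟨hfa, hfb⟩ := hf j (by omega)
    rw [Function.iterate_succ_apply',
      integral_mul_deriv_eq_deriv_mul (fun x _ ↦ u.hasDerivAt x)
        (fun x _ ↦ (derivative^[j] f).hasDerivAt x)
        (u.derivative.continuous.intervalIntegrable _ _)
        ((derivative^[j] f).derivative.continuous.intervalIntegrable _ _),
      hfa, hfb, hrest]
    ring

theorem iterate_derivative_X_sq_sub_one_pow_eval_eq_zero {n j : ℕ} (hj : j < n) {x : ℝ}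
    (hx : x ^ 2 = 1) : (derivative^[j] (((X : ℝ[X]) ^ 2 - 1) ^ n)).eval x = 0 := by
  obtain ⟨c, hc⟩ := ((X : ℝ[X]) ^ 2 - 1).pow_sub_dvd_iterate_derivative_pow n j
  simp [hc, hx, zero_pow (Nat.sub_ne_zero_of_lt hj)]

theorem integral_mul_legendrePoly_eq_zero {n : ℕ} {u : ℝ[X]} (hu : u.natDegree < n) :
    ∫ x in (-1 : ℝ)..1, u.eval x * (legendrePoly n).eval x = 0 := by
  have h := integral_mul_iterate_derivative_eq_zero (a := -1) (b := 1)
    (fun j hj ↦ ⟨iterate_derivative_X_sq_sub_one_pow_eval_eq_zero hj (by norm_num),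
      iterate_derivative_X_sq_sub_one_pow_eval_eq_zero hj (by norm_num)⟩) le_rfl hu
  simp only [legendrePoly, eval_mul, eval_C, mul_left_comm (u.eval _)]
  rw [intervalIntegral.integral_const_mul, h, mul_zero]

theorem monic_X_sq_sub_one : ((X : ℝ[X]) ^ 2 - 1).Monic := by
  simpa using monic_X_pow_sub_C (1 : ℝ) two_ne_zero

theorem natDegree_X_sq_sub_one_pow (n : ℕ) : (((X : ℝ[X]) ^ 2 - 1) ^ n).natDegree = 2 * n := by
  have h2 : ((X : ℝ[X]) ^ 2 - 1).natDegree = 2 := by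
    simpa using natDegree_X_pow_sub_C (n := 2) (r := (1 : ℝ))
  rw [monic_X_sq_sub_one.natDegree_pow, h2, mul_comm]

theorem natDegree_legendrePoly_le (n : ℕ) : (legendrePoly n).natDegree ≤ n := by
  refine (natDegree_C_mul_le _ _).trans ?_
  have := natDegree_iterate_derivative (((X : ℝ[X]) ^ 2 - 1) ^ n) n
  rw [natDegree_X_sq_sub_one_pow] at this
  omega

theorem coeff_legendrePoly_self_ne_zero (n : ℕ) : (legendrePoly n).coeff n ≠ 0 := by
  have hlead : (((X : ℝ[X]) ^ 2 - 1) ^ n).coeff (n + n) = 1 := by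
    have := (monic_X_sq_sub_one.pow n).leadingCoeff
    rwa [leadingCoeff, natDegree_X_sq_sub_one_pow, two_mul] at this
  have hdesc : (n + n).descFactorial n ≠ 0 := by
    rw [Ne, Nat.descFactorial_eq_zero_iff_lt]; omega
  rw [legendrePoly, coeff_C_mul, coeff_iterate_derivative, hlead, nsmul_one]
  exact mul_ne_zero (by positivity) (Nat.cast_ne_zero.mpr hdesc)

theorem Polynomial.eq_zero_of_integral_sq_eq_zero {S : ℝ[X]} {a b : ℝ} (hab : a < b)
    (h : ∫ t in a..b, S.eval t ^ 2 = 0) : S = 0 := by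
  by_contra hS
  have hroots : volume {t | S.IsRoot t} = 0 := (finite_setOfPred_isRoot hS).measure_zero _
  have hsupp : Set.Ioc a b \ {t | S.IsRoot t} ⊆
      Function.support (fun t ↦ S.eval t ^ 2) ∩ Set.Ioc a b :=
    fun t ⟨ht, hroot⟩ ↦ ⟨pow_ne_zero 2 hroot, ht⟩
  have hpos : 0 < volume (Function.support (fun t ↦ S.eval t ^ 2) ∩ Set.Ioc a b) := by
    refine lt_of_lt_of_le ?_ (measure_mono hsupp)
    rw [measure_sdiff_null hroots, Real.volume_Ioc]
    exact ENNReal.ofReal_pos.mpr (sub_pos.mpr hab)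
  have := (integral_pos_iff_support_of_nonneg_ae
    (Filter.Eventually.of_forall fun t ↦ sq_nonneg (S.eval t))
    ((S.continuous.pow 2).intervalIntegrable a b)).mpr ⟨hab, hpos⟩
  exact this.ne' h

def OrthogonalToShiftedPowers (a b : ℝ) (q : ℕ) (S : ℝ[X]) : Prop :=
  ∀ p : ℕ, 1 ≤ p → p ≤ q → ∫ t in a..b, S.eval t * (t - a) ^ p = 0

namespace OrthogonalToShiftedPowers

variable {a b : ℝ} {q : ℕ} {S T : ℝ[X]}

theorem integral_mul_sub_mul_eq_zero (hS : OrthogonalToShiftedPowers a b q S) {U : ℝ[X]}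
    (hU : U.natDegree < q) : ∫ t in a..b, S.eval t * ((t - a) * U.eval t) = 0 := by
  have hexpand : ∀ t, S.eval t * ((t - a) * U.eval t) =
      ∑ i ∈ Finset.range q, (taylor a U).coeff i * (S.eval t * (t - a) ^ (i + 1)) := by
    intro t
    have hU' : U.eval t = ∑ i ∈ Finset.range q, (taylor a U).coeff i * (t - a) ^ i := by
      rw [← eval_eq_sum_range' (by rwa [natDegree_taylor]), taylor_eval, sub_add_cancel]
    rw [hU', Finset.mul_sum, Finset.mul_sum]
    exact Finset.sum_congr rfl fun i _ ↦ by ring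
  simp only [hexpand]
  rw [integral_finsetSum fun i _ ↦ (by fun_prop : Continuous _).intervalIntegrable _ _]
  refine Finset.sum_eq_zero fun i hi ↦ ?_
  rw [intervalIntegral.integral_const_mul, hS (i + 1) (by omega)
    (by rw [Finset.mem_range] at hi; omega), mul_zero]

theorem eq_zero_of_eval_eq_zero (hab : a < b) (hS : OrthogonalToShiftedPowers a b q S)
    (hdeg : S.natDegree ≤ q) (ha : S.eval a = 0) : S = 0 := by
  obtain ⟨U, rfl⟩ := dvd_iff_isRoot.mpr ha
  rcases eq_or_ne U 0 with rfl | hU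
  · exact mul_zero _
  have hUdeg : U.natDegree < q := by
    rw [natDegree_mul (X_sub_C_ne_zero a) hU, natDegree_X_sub_C] at hdeg
    omega
  refine eq_zero_of_integral_sq_eq_zero hab ?_
  simpa [sq, mul_assoc] using hS.integral_mul_sub_mul_eq_zero hUdeg

theorem sub_C_mul (hS : OrthogonalToShiftedPowers a b q S)
    (hT : OrthogonalToShiftedPowers a b q T) (c : ℝ) :
    OrthogonalToShiftedPowers a b q (S - C c * T) := by
  intro p hp hpq
  simp only [eval_sub, eval_mul, eval_C, sub_mul, mul_assoc]
  rw [integral_sub ((by fun_prop : Continuous _).intervalIntegrable _ _)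
      ((by fun_prop : Continuous _).intervalIntegrable _ _),
    intervalIntegral.integral_const_mul, hS p hp hpq, hT p hp hpq, mul_zero, sub_zero]

theorem eq_C_mul (hab : a < b) (hS : OrthogonalToShiftedPowers a b q S)
    (hT : OrthogonalToShiftedPowers a b q T) (hSdeg : S.natDegree ≤ q)
    (hTdeg : T.natDegree ≤ q) (hTa : T.eval a ≠ 0) :
    S = C (S.eval a / T.eval a) * T := by
  refine sub_eq_zero.mp ((hS.sub_C_mul hT _).eq_zero_of_eval_eq_zero hab ?_ ?_)
  · exact (natDegree_sub_le _ _).trans (max_le hSdeg ((natDegree_C_mul_le _ _).trans hTdeg))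
  · simp [div_mul_cancel₀ _ hTa]

theorem of_projection {g : ℝ → ℝ} {R : ℝ[X]}
    (hg : IntervalIntegrable g volume a b)
    (horth : ∀ p : ℕ, 1 ≤ p → p ≤ q → ∫ t in a..b, g t * (t - a) ^ p = 0)
    (hproj : ∀ v : ℝ[X], v.natDegree ≤ q → ∫ t in a..b, (g t - R.eval t) * v.eval t = 0) :
    OrthogonalToShiftedPowers a b q R := by
  intro p hp hpq
  have hres := hproj ((X - C a) ^ p)
    (natDegree_pow_le.trans (by rw [natDegree_X_sub_C]; omega))
  simp only [eval_pow, eval_sub, eval_X, eval_C, sub_mul] at hres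
  rw [integral_sub (hg.mul_continuousOn (by fun_prop))
    ((by fun_prop : Continuous _).intervalIntegrable _ _), horth p hp hpq] at hres
  linarith

end OrthogonalToShiftedPowers

def IsRadauPoly (q : ℕ) (Q : ℝ[X]) : Prop :=
  legendrePoly q + legendrePoly (q + 1) = (X + C 1) * Q

namespace IsRadauPoly

variable {q : ℕ} {Q : ℝ[X]}

theorem ne_zero (hQ : IsRadauPoly q Q) : Q ≠ 0 := by
  rintro rfl
  have hcoeff := congrArg (coeff · (q + 1)) hQ
  simp only [mul_zero, coeff_zero, coeff_add, coeff_eq_zero_of_natDegree_lt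
    ((natDegree_legendrePoly_le q).trans_lt q.lt_succ_self), zero_add] at hcoeff
  exact coeff_legendrePoly_self_ne_zero (q + 1) hcoeff

theorem natDegree_le (hQ : IsRadauPoly q Q) : Q.natDegree ≤ q := by
  have hdeg := (natDegree_add_le _ _).trans (max_le
    ((natDegree_legendrePoly_le q).trans q.le_succ) (natDegree_legendrePoly_le (q + 1)))
  rw [hQ, natDegree_mul (X_add_C_ne_zero 1) hQ.ne_zero, natDegree_X_add_C] at hdeg
  omega

theorem orthogonalToShiftedPowers (hQ : IsRadauPoly q Q) :
    OrthogonalToShiftedPowers (-1) 1 q Q := by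
  intro p hp hpq
  obtain ⟨p, rfl⟩ := Nat.exists_eq_add_of_le' hp
  have hu : ((X + C 1 : ℝ[X]) ^ p).natDegree < q :=
    natDegree_pow_le.trans_lt (by rw [natDegree_X_add_C]; omega)
  have hsplit : ∀ x : ℝ, Q.eval x * (x - -1) ^ (p + 1) =
      ((X + C 1 : ℝ[X]) ^ p).eval x * (legendrePoly q).eval x +
        ((X + C 1 : ℝ[X]) ^ p).eval x * (legendrePoly (q + 1)).eval x := by
    intro x
    have hx := congrArg (eval x) hQ
    simp only [eval_add, eval_mul, eval_X, eval_C] at hx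
    rw [← mul_add, hx]
    simp only [eval_pow, eval_add, eval_X, eval_C]
    ring
  simp only [hsplit]
  rw [integral_add ((by fun_prop : Continuous _).intervalIntegrable _ _)
      ((by fun_prop : Continuous _).intervalIntegrable _ _),
    integral_mul_legendrePoly_eq_zero hu, integral_mul_legendrePoly_eq_zero (by omega), add_zero]

theorem eval_neg_one_ne_zero (hQ : IsRadauPoly q Q) : Q.eval (-1) ≠ 0 := fun h ↦
  hQ.ne_zero (hQ.orthogonalToShiftedPowers.eq_zero_of_eval_eq_zero (by norm_num)
    hQ.natDegree_le h)

end IsRadauPoly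

noncomputable def rescale (a b : ℝ) : ℝ[X] := C (2 / (b - a)) * X - C ((a + b) / (b - a))

theorem eval_rescale (a b t : ℝ) : (rescale a b).eval t = (2 * t - a - b) / (b - a) := by
  simp only [rescale, eval_sub, eval_mul, eval_C, eval_X]
  ring

theorem eval_rescale_left {a b : ℝ} (hab : a ≠ b) : (rescale a b).eval a = -1 := by
  rw [eval_rescale]
  field_simp
  ring

theorem natDegree_comp_rescale_le (S : ℝ[X]) (a b : ℝ) :
    (S.comp (rescale a b)).natDegree ≤ S.natDegree := by
  have h : (rescale a b).natDegree ≤ 1 := by unfold rescale; compute_degree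
  rw [natDegree_comp]
  exact (Nat.mul_le_mul_left _ h).trans (mul_one _).le

theorem integral_comp_rescale (f : ℝ → ℝ) {a b : ℝ} (hab : a ≠ b) :
    ∫ t in a..b, f ((2 * t - a - b) / (b - a)) = (b - a) / 2 * ∫ x in (-1 : ℝ)..1, f x := by
  have hba : b - a ≠ 0 := sub_ne_zero.mpr hab.symm
  have h := integral_comp_mul_add f (div_ne_zero two_ne_zero hba) (-(a + b) / (b - a))
    (a := a) (b := b)
  have hlo : 2 / (b - a) * a + -(a + b) / (b - a) = -1 := by field_simp; ring
  have hhi : 2 / (b - a) * b + -(a + b) / (b - a) = 1 := by field_simp; ring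
  rw [hlo, hhi, inv_div, smul_eq_mul] at h
  rw [← h]
  congr 1
  funext t
  congr 1
  ring

theorem OrthogonalToShiftedPowers.comp_rescale {a b : ℝ} {q : ℕ} {S : ℝ[X]} (hab : a ≠ b)
    (hS : OrthogonalToShiftedPowers (-1) 1 q S) :
    OrthogonalToShiftedPowers a b q (S.comp (rescale a b)) := by
  intro p hp hpq
  have hsubst : ∀ t, (S.comp (rescale a b)).eval t * (t - a) ^ p =
      ((b - a) / 2) ^ p * (S.eval ((2 * t - a - b) / (b - a)) *
        ((2 * t - a - b) / (b - a) - -1) ^ p) := by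
    intro t
    rw [eval_comp, eval_rescale, mul_left_comm, ← mul_pow]
    congr 2
    field_simp
    ring
  simp only [hsubst]
  rw [integral_comp_rescale (fun x ↦ ((b - a) / 2) ^ p * (S.eval x * (x - -1) ^ p)) hab,
    intervalIntegral.integral_const_mul, hS p hp hpq, mul_zero, mul_zero]

theorem intervalIntegrable_of_memLp_two {g : ℝ → ℝ} {a b : ℝ} (hab : a ≤ b)
    (hg : MemLp g 2 (volume.restrict (Set.Ioc a b))) : IntervalIntegrable g volume a b := by
  have : IsFiniteMeasure (volume.restrict (Set.Ioc a b)) := by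
    rw [isFiniteMeasure_restrict]; exact measure_Ioc_lt_top.ne
  exact (intervalIntegrable_iff_integrableOn_Ioc_of_le hab).mpr (hg.integrable one_le_two)

theorem mdG_projected_residual_is_radau_general
    (a b : ℝ) (hab : a < b) (q : ℕ)
    (Q : Polynomial ℝ)
    (hQ : legendrePoly q + legendrePoly (q + 1) = (Polynomial.X + Polynomial.C 1) * Q)
    (g : ℝ → ℝ) (hg : MemLp g 2 (MeasureTheory.volume.restrict (Set.Ioc a b)))
    (horth : ∀ p : ℕ, 1 ≤ p → p ≤ q →
      ∫ t in a..b, g t * (t - a) ^ p = 0)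
    (R : Polynomial ℝ) (hRdeg : R.natDegree ≤ q)
    (hproj : ∀ v : Polynomial ℝ, v.natDegree ≤ q →
      ∫ t in a..b, (g t - R.eval t) * v.eval t = 0) :
    ∃ c : ℝ, ∀ t : ℝ,
      R.eval t = c * Q.eval ((2 * t - a - b) / (b - a)) := by
  have hQ : IsRadauPoly q Q := hQ
  have hR := OrthogonalToShiftedPowers.of_projection
    (intervalIntegrable_of_memLp_two hab.le hg) horth hproj
  have hQσ := hQ.orthogonalToShiftedPowers.comp_rescale hab.ne
  have hQσa : (Q.comp (rescale a b)).eval a ≠ 0 := by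
    rw [eval_comp, eval_rescale_left hab.ne]
    exact hQ.eval_neg_one_ne_zero
  have hRQ := hR.eq_C_mul hab hQσ hRdeg
    ((natDegree_comp_rescale_le Q a b).trans hQ.natDegree_le) hQσa
  generalize R.eval a / (Q.comp (rescale a b)).eval a = c at hRQ
  exact ⟨_, fun t ↦ by rw [hRQ, eval_mul, eval_C, eval_comp, eval_rescale]⟩

/-- The L²-projection of the mdG residual is a Radau polynomial: if `g ∈ L²(a,b)` satisfies
`∫_a^b g(t) (t−a)^p dt = 0` for `p = 1, …, q`, then its orthogonal projection `R̃` in `L²(a,b)`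
onto the polynomials of degree `≤ q` (characterized by `R̃` being such a polynomial with
`g − R̃` orthogonal to all polynomials of degree `≤ q`) is a scalar multiple of the rescaled
`q`-th Radau polynomial `Q_q = (P_q + P_{q+1})/(x+1)`. -/
theorem mdG_projected_residual_is_radau
    (a b : ℝ) (hab : a < b) (q : ℕ) (hq : 1 ≤ q)
    (Q : Polynomial ℝ)
    (hQ : legendrePoly q + legendrePoly (q + 1) = (Polynomial.X + Polynomial.C 1) * Q)
    (g : ℝ → ℝ) (hg : MemLp g 2 (MeasureTheory.volume.restrict (Set.Ioc a b)))
    (horth : ∀ p : ℕ, 1 ≤ p → p ≤ q →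
      ∫ t in a..b, g t * (t - a) ^ p = 0)
    (R : Polynomial ℝ) (hRdeg : R.natDegree ≤ q)
    (hproj : ∀ v : Polynomial ℝ, v.natDegree ≤ q →
      ∫ t in a..b, (g t - R.eval t) * v.eval t = 0) :
    ∃ c : ℝ, ∀ t : ℝ,
      R.eval t = c * Q.eval ((2 * t - a - b) / (b - a)) :=
  mdG_projected_residual_is_radau_general a b hab q Q hQ g hg horth R hRdeg hproj
end
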